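/- arXiv:2509.16362 — 2 statements merged into one kernel-verified Lean document; each statement's English description precedes it below -/
import Mathlib

section
/- Let p ≥ 3 be a prime and A, C ∈ ℚ_p with |A|_p < 1, |C|_p < 1 and |A|_p ≠ |C|_p, and let f(x) = (Ax² + 1)/(Cx² + 1). Then f has a unique fixed point x₀ in ℰ_p, and this fixed point is attractive: |f'(x₀)|_p < 1. -/
/-- The mapping `f(x) = (Ax² + 1)/(Cx² + 1)` on `ℚ_p`. -/
noncomputable def fracMap (p : ℕ) [Fact p.Prime] (A C : ℚ_[p]) (x : ℚ_[p]) : ℚ_[p] :=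
  (A * x ^ 2 + 1) / (C * x ^ 2 + 1)

/-- `ℰ_p = {x ∈ ℚ_p : |x|_p = 1, |x - 1|_p < p^{-1/(p-1)}}`. -/
noncomputable def padicExpDomain (p : ℕ) [Fact p.Prime] : Set ℚ_[p] :=
  {x | ‖x‖ = 1 ∧ ‖x - 1‖ < (p : ℝ) ^ (-(1 : ℝ) / ((p : ℝ) - 1))}

/-!
For `‖x‖, ‖y‖ ≤ 1` the identity
`f x - f y = (A - C)(x - y)(x + y) / ((Cx² + 1)(Cy² + 1))` has unit denominators, so `f` is
`‖A - C‖`-Lipschitz on the unit ball, and `‖A - C‖ < 1` by the ultrametric inequality. Since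
`f 0 = 1`, `f` maps the unit ball into `closedBall 1 ‖A - C‖ ⊆ closedBall 1 p⁻¹`, and for
`p ≥ 3` this last ball is exactly `ℰ_p` because `p⁻¹ < p^{-1/(p-1)} < 1`. Banach's fixed point
theorem gives the unique fixed point; as the unit ball is open, the Lipschitz bound also bounds
`|f'|` by `‖A - C‖ < 1`.
-/

open Metric Set Topology

theorem LipschitzOnWith.existsUnique_fixedPoint {α : Type*} [MetricSpace α] {K : NNReal}
    {f : α → α} {s : Set α} (hf : LipschitzOnWith K f s) (hK : K < 1) (hsf : MapsTo f s s)
    (hsc : IsComplete s) (hs : s.Nonempty) : ∃! x, x ∈ s ∧ f x = x := by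
  obtain ⟨x₀, hx₀⟩ := hs
  obtain ⟨x, hxs, hfx, -⟩ := ContractingWith.exists_fixedPoint' hsc hsf
    ⟨hK, hf.mapsToRestrict hsf⟩ hx₀ (edist_ne_top _ _)
  refine ⟨x, ⟨hxs, hfx⟩, fun y ⟨hys, hfy⟩ => dist_le_zero.mp ?_⟩
  have hcontr := hf.dist_le_mul y hys x hxs
  rw [hfy, hfx.eq] at hcontr
  nlinarith [dist_nonneg (x := y) (y := x), show (K : ℝ) < 1 from hK]

theorem inv_lt_rpow_neg_one_div_sub_one {q : ℝ} (hq : 2 < q) : q⁻¹ < q ^ (-1 / (q - 1)) := by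
  rw [← Real.rpow_neg_one, Real.rpow_lt_rpow_left_iff (by linarith),
    lt_div_iff₀ (by linarith)]
  linarith

theorem rpow_neg_one_div_sub_one_lt_one {q : ℝ} (hq : 1 < q) : q ^ (-1 / (q - 1)) < 1 :=
  Real.rpow_lt_one_of_one_lt_of_neg hq (div_neg_of_neg_of_pos (by norm_num) (by linarith))

theorem IsUltrametricDist.norm_eq_one_of_norm_sub_one_lt_one {R : Type*} [SeminormedRing R]
    [NormOneClass R] [IsUltrametricDist R] {x : R} (hx : ‖x - 1‖ < 1) : ‖x‖ = 1 := by
  have h := norm_add_eq_max_of_norm_ne_norm (hx.trans_eq norm_one.symm).ne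
  rwa [sub_add_cancel, norm_one, max_eq_right hx.le] at h

theorem IsUltrametricDist.norm_sub_lt_of_norm_lt {E : Type*} [SeminormedAddCommGroup E]
    [IsUltrametricDist E] {x y : E} {r : ℝ} (hx : ‖x‖ < r) (hy : ‖y‖ < r) : ‖x - y‖ < r := by
  rw [← dist_eq_norm]
  calc dist x y ≤ max (dist x 0) (dist 0 y) := dist_triangle_max x 0 y
    _ < r := max_lt (by rwa [dist_zero_right]) (by rwa [dist_zero_left])

namespace Padic

variable {p : ℕ} [Fact p.Prime]

theorem norm_le_inv_iff_norm_lt_one (x : ℚ_[p]) : ‖x‖ ≤ (p : ℝ)⁻¹ ↔ ‖x‖ < 1 := by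
  simpa using (norm_lt_pow_iff_norm_le_pow_sub_one x 0).symm

theorem closedBall_one_inv_subset_closedBall_zero_one :
    closedBall (1 : ℚ_[p]) (p : ℝ)⁻¹ ⊆ closedBall 0 1 := by
  rw [IsUltrametricDist.closedBall_eq_of_mem (x := (0 : ℚ_[p])) (y := 1) (by simp)]
  exact closedBall_subset_closedBall (inv_le_one_of_one_le₀ (Nat.one_le_cast.mpr
    (Fact.out : p.Prime).one_le))

end Padic

theorem padicExpDomain_eq_closedBall {p : ℕ} [Fact p.Prime] (hp : 3 ≤ p) :
    padicExpDomain p = closedBall 1 (p : ℝ)⁻¹ := by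
  have hp' : (2 : ℝ) < p := by exact_mod_cast hp
  ext x
  rw [mem_closedBall, dist_eq_norm, Padic.norm_le_inv_iff_norm_lt_one]
  constructor
  · exact fun hx => hx.2.trans (rpow_neg_one_div_sub_one_lt_one (by linarith))
  · intro hx
    refine ⟨IsUltrametricDist.norm_eq_one_of_norm_sub_one_lt_one hx, ?_⟩
    calc ‖x - 1‖ ≤ (p : ℝ)⁻¹ := (Padic.norm_le_inv_iff_norm_lt_one _).mpr hx
      _ < _ := by simpa using inv_lt_rpow_neg_one_div_sub_one hp'

section fracMap

variable {p : ℕ} [Fact p.Prime] {A C : ℚ_[p]}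

theorem norm_mul_sq_add_one (hC : ‖C‖ < 1) {x : ℚ_[p]} (hx : ‖x‖ ≤ 1) :
    ‖C * x ^ 2 + 1‖ = 1 := by
  have hlt : ‖C * x ^ 2‖ < 1 := by
    rw [norm_mul, norm_pow]
    exact mul_lt_one_of_nonneg_of_lt_one_left (norm_nonneg _) hC (pow_le_one₀ (norm_nonneg _) hx)
  rw [IsUltrametricDist.norm_add_eq_max_of_norm_ne_norm (hlt.trans_eq norm_one.symm).ne,
    norm_one, max_eq_right hlt.le]

theorem fracMap_sub_fracMap {x y : ℚ_[p]} (hx : C * x ^ 2 + 1 ≠ 0) (hy : C * y ^ 2 + 1 ≠ 0) :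
    fracMap p A C x - fracMap p A C y =
      (A - C) * (x - y) * (x + y) / ((C * x ^ 2 + 1) * (C * y ^ 2 + 1)) := by
  rw [fracMap, fracMap, div_sub_div _ _ hx hy]
  ring

theorem lipschitzOnWith_fracMap (hC : ‖C‖ < 1) :
    LipschitzOnWith ‖A - C‖₊ (fracMap p A C) (closedBall 0 1) := by
  refine LipschitzOnWith.of_dist_le_mul fun x hx y hy => ?_
  rw [mem_closedBall_zero_iff] at hx hy
  have hdx := norm_mul_sq_add_one hC hx
  have hdy := norm_mul_sq_add_one hC hy
  have hsum : ‖x + y‖ ≤ 1 := (IsUltrametricDist.norm_add_le_max x y).trans (max_le hx hy)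
  rw [dist_eq_norm, dist_eq_norm, coe_nnnorm,
    fracMap_sub_fracMap (norm_ne_zero_iff.mp (hdx.trans_ne one_ne_zero))
      (norm_ne_zero_iff.mp (hdy.trans_ne one_ne_zero)),
    norm_div, norm_mul, norm_mul, norm_mul, hdx, hdy, mul_one, div_one]
  exact mul_le_of_le_one_right (by positivity) hsum

theorem fracMap_zero : fracMap p A C 0 = 1 := by
  simp [fracMap]

theorem mapsTo_fracMap_closedBall (hA : ‖A‖ < 1) (hC : ‖C‖ < 1) :
    MapsTo (fracMap p A C) (closedBall 1 (p : ℝ)⁻¹) (closedBall 1 (p : ℝ)⁻¹) := by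
  intro x hx
  have hx₀ := Padic.closedBall_one_inv_subset_closedBall_zero_one hx
  have hlip := (lipschitzOnWith_fracMap (A := A) hC).dist_le_mul x hx₀ 0
    (mem_closedBall_self zero_le_one)
  rw [fracMap_zero, dist_zero_right] at hlip
  rw [mem_closedBall_zero_iff] at hx₀
  rw [mem_closedBall]
  calc dist (fracMap p A C x) 1 ≤ ‖A - C‖ * ‖x‖ := hlip
    _ ≤ ‖A - C‖ := mul_le_of_le_one_right (norm_nonneg _) hx₀
    _ ≤ (p : ℝ)⁻¹ := (Padic.norm_le_inv_iff_norm_lt_one _).mpr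
      (IsUltrametricDist.norm_sub_lt_of_norm_lt hA hC)

end fracMap

theorem fracMap_unique_attractive_fixed_point_in_Ep_general
    (p : ℕ) [Fact p.Prime] (hp : 3 ≤ p)
    (A C : ℚ_[p]) (hA : ‖A‖ < 1) (hC : ‖C‖ < 1) :
    (∃! x₀ : ℚ_[p], x₀ ∈ padicExpDomain p ∧ fracMap p A C x₀ = x₀) ∧
    (∀ x₀ : ℚ_[p], x₀ ∈ padicExpDomain p → fracMap p A C x₀ = x₀ →
      ‖deriv (fracMap p A C) x₀‖ < 1) := by
  have hAC : ‖A - C‖₊ < 1 := IsUltrametricDist.norm_sub_lt_of_norm_lt hA hC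
  have hlip := lipschitzOnWith_fracMap (A := A) hC
  have hball := Padic.closedBall_one_inv_subset_closedBall_zero_one (p := p)
  rw [padicExpDomain_eq_closedBall hp]
  refine ⟨(hlip.mono hball).existsUnique_fixedPoint hAC (mapsTo_fracMap_closedBall hA hC)
    isClosed_closedBall.isComplete ⟨1, mem_closedBall_self (by positivity)⟩, fun x hx _ => ?_⟩
  have hnhds : closedBall (0 : ℚ_[p]) 1 ∈ 𝓝 x :=
    (IsUltrametricDist.isOpen_closedBall _ one_ne_zero).mem_nhds (hball hx)
  exact (norm_deriv_le_of_lipschitzOn hnhds hlip).trans_lt hAC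

/-- for `p ≥ 3` prime, `|A|_p < 1`, `|C|_p < 1`, `|A|_p ≠ |C|_p`, the map
`f(x) = (Ax²+1)/(Cx²+1)` has a unique fixed point in `ℰ_p`, which is attractive. -/
theorem fracMap_unique_attractive_fixed_point_in_Ep
    (p : ℕ) [Fact p.Prime] (hp : 3 ≤ p)
    (A C : ℚ_[p]) (hA : ‖A‖ < 1) (hC : ‖C‖ < 1) (hAC : ‖A‖ ≠ ‖C‖) :
    (∃! x₀ : ℚ_[p], x₀ ∈ padicExpDomain p ∧ fracMap p A C x₀ = x₀) ∧
    (∀ x₀ : ℚ_[p], x₀ ∈ padicExpDomain p → fracMap p A C x₀ = x₀ →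
      ‖deriv (fracMap p A C) x₀‖ < 1) :=
  fracMap_unique_attractive_fixed_point_in_Ep_general p hp A C hA hC
end

section
/- Let p = 2, k ≥ 2, N a nonzero integer, ρ ∈ ℚ_2 with ρ^{2N} ∉ {−1,0,1}, set θ = ρ^{2N}, and let h ∈ ℚ_2 be a fixed point of f_θ with h ≠ −1 and ρ^{−N}h + ρ^N ≠ 0. For n ≥ 1 and σ : V_n → Φ define m_n(σ) = ρ^{H_n(σ)} h^{c(σ)} / ((ρ^{−N}h + ρ^N)^{k(k^n−1)/(k−1)} (h + 1)), where c(σ) = card{x ∈ W_n : σ(x) = 1} and H_n(σ) = Σ_{⟨x,y⟩ ∈ L_n} N·σ(x)σ(y). Then the set {|m_n(σ)|_2 : n ≥ 1, σ : V_n → Φ} is unbounded if and only if |ρ|_2 = 1. -/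
open scoped BigOperators

/-- The vertices of `V_n` of the Cayley tree of order `k`: words of length `≤ n` over
`{1,…,k}` (a word of length `m` is encoded as `Fin m → Fin k`; the root is the empty word). -/
abbrev CayleyVertexLE (k n : ℕ) := Σ m : Fin (n + 1), Fin (m : ℕ) → Fin k

/-- Spin values: configurations take values in `Φ = {-1, 1} ⊆ ℤ`, encoded by `Bool`. -/
def spinValue (b : Bool) : ℤ := if b then 1 else -1

/-- The Ising Hamiltonian `H_n(σ) = Σ_{⟨x,y⟩ ∈ L_n} N·σ(x)σ(y)`: the sum runs over all edges
`⟨x, x·i⟩` with both endpoints in `V_n`. -/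
def isingHam (k : ℕ) (N : ℤ) (n : ℕ) (σ : CayleyVertexLE k n → Bool) : ℤ :=
  ∑ m : Fin n, ∑ f : Fin ((m : ℕ) + 1) → Fin k,
    N * spinValue (σ ⟨⟨(m : ℕ), Nat.lt_succ_of_lt m.2⟩, fun i => f i.castSucc⟩) *
      spinValue (σ ⟨⟨(m : ℕ) + 1, Nat.succ_lt_succ m.2⟩, f⟩)

/-- `c(σ) = card{x ∈ W_n : σ(x) = 1}`. -/
def bdryPlusCount (k n : ℕ) (σ : CayleyVertexLE k n → Bool) : ℕ :=
  (Finset.univ.filter fun f : Fin n → Fin k =>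
    σ ⟨⟨n, Nat.lt_succ_self n⟩, f⟩ = true).card

/-- The cylinder value
`m_n(σ) = ρ^{H_n(σ)} h^{c(σ)} / ((ρ^{-N}h + ρ^N)^{k(k^n-1)/(k-1)} (h + 1))` of the
translation-invariant generalized `2`-adic Gibbs measure `μ_h` of the Ising model. -/
noncomputable def cylinderValue2 (k : ℕ) (N : ℤ) (ρ h : ℚ_[2]) (n : ℕ)
    (σ : CayleyVertexLE k n → Bool) : ℚ_[2] :=
  ρ ^ isingHam k N n σ * h ^ bdryPlusCount k n σ /
    ((ρ ^ (-N) * h + ρ ^ N) ^ (k * (k ^ n - 1) / (k - 1)) * (h + 1))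

/-!
Put `g = ρ^N`, so that `θ = g²` and `m_n(σ) = g^S h^c / ((g⁻¹h + g)^E (h + 1))`, where `S` is
the spin sum over the `E = k + k² + ⋯ + kⁿ` edges (so `|S| ≤ E`) and `c ≤ kⁿ`. Comparing
valuations on both sides of `(θh + 1)^k = h (h + θ)^k` leaves only `v(h) = 0`, or `v(θ) < 0` and
`v(h) = ± k v(θ)`.

If `|ρ|₂ ≠ 1` then `v(g) ≠ 0`, and in each of the three cases `v(g^S h^c / (g⁻¹h + g)^E)` is at
least `-2k|v(g)|`; in the case `v(h) = k v(θ)` this uses `(k - 1) E + k = k^{n+1}`. So the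
values are bounded. If `|ρ|₂ = 1` then `|h|₂ = 1`, and as the sum of two `2`-adic units is not a
unit, `|g⁻¹h + g|₂ = |h + g²|₂ < 1`; the configuration with all spins `-1` then has
`|m_n| = |g⁻¹h + g|₂^{-E} / |h + 1|₂ → ∞`.
-/

def isingPottsMap {K : Type*} [Field K] (k : ℕ) (θ x : K) : K := ((θ * x + 1) / (x + θ)) ^ k

section IsingPottsMap
variable {K : Type*} [Field K] {k : ℕ} {θ h : K}

lemma isingPottsMap_eq_self_iff (hhθ : h + θ ≠ 0) :
    isingPottsMap k θ h = h ↔ (θ * h + 1) ^ k = h * (h + θ) ^ k := by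
  rw [isingPottsMap, div_pow, div_eq_iff (pow_ne_zero _ hhθ)]

lemma ne_zero_of_isingPottsMap_eq_self (hk : k ≠ 0) (hhθ : h + θ ≠ 0)
    (hfix : isingPottsMap k θ h = h) : h ≠ 0 := by
  rintro rfl
  rw [zero_add] at hhθ
  simp [isingPottsMap, hk, hhθ] at hfix

end IsingPottsMap

lemma inv_mul_add_eq_inv_mul_add_sq {K : Type*} [Field K] {g : K} (hg : g ≠ 0) (h : K) :
    g⁻¹ * h + g = g⁻¹ * (h + g ^ 2) := by
  field_simp

-- `s`, `T`, `A`, `B` stand for `v(h)`, `v(θ)`, `v(θh + 1)`, `v(h + θ)` at a fixed point `h`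
-- of `f_θ`.
lemma isingPotts_valuation_cases {K T s A B : ℤ} (hK : 2 ≤ K)
    (hA : T + s ≠ 0 → A = min (T + s) 0) (hA' : min (T + s) 0 ≤ A)
    (hB : s ≠ T → B = min s T) (hB' : min s T ≤ B)
    (heq : K * A = s + K * B) :
    s = 0 ∨ (T < 0 ∧ (s = K * T ∨ s = -(K * T))) := by
  by_cases hs : s = 0
  · exact Or.inl hs
  right
  rcases eq_or_ne s T with rfl | hsT
  · have hB2 : K * s ≤ K * B := by gcongr; simpa using hB'
    rw [hA (by omega)] at heq
    rcases lt_or_gt_of_ne hs with hneg | hpos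
    · rw [min_eq_left (by omega)] at heq; nlinarith
    · rw [min_eq_right (by omega)] at heq; nlinarith
  rw [hB hsT] at heq
  by_cases hTs : T + s = 0
  · have hA2 : 0 ≤ K * A := mul_nonneg (by omega) (by simpa [hTs] using hA')
    rcases lt_or_gt_of_ne hs with hneg | hpos
    · rw [min_eq_left (by omega)] at heq; nlinarith
    · rw [min_eq_right (by omega)] at heq; nlinarith
  rw [hA hTs, min_def, min_def] at heq
  rcases lt_or_gt_of_ne hs with hneg | hpos <;> split_ifs at heq
  all_goals first
    | (exfalso; nlinarith)
    | exact ⟨by nlinarith, Or.inl (by linarith)⟩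
    | exact ⟨by nlinarith, Or.inr (by linarith)⟩

namespace Padic
variable {p : ℕ} [Fact p.Prime]

lemma valuation_neg (x : ℚ_[p]) : (-x).valuation = x.valuation := by
  rcases eq_or_ne x 0 with rfl | hx
  · simp
  have h := norm_neg x
  rwa [norm_eq_zpow_neg_valuation hx, norm_eq_zpow_neg_valuation (neg_ne_zero.2 hx),
    zpow_right_inj₀ (by exact_mod_cast (Fact.out : p.Prime).pos)
      (by exact_mod_cast (Fact.out : p.Prime).ne_one), neg_inj] at h

lemma valuation_add_of_lt {x y : ℚ_[p]} (hx : x ≠ 0) (hlt : x.valuation < y.valuation) :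
    (x + y).valuation = x.valuation := by
  have hxy : x + y ≠ 0 := by
    intro h0
    rw [← neg_eq_of_add_eq_zero_right h0, valuation_neg] at hlt
    exact hlt.false
  have h1 := le_valuation_add hxy
  have h2 : min (x + y).valuation (-y).valuation ≤ x.valuation := by
    simpa using le_valuation_add (x := x + y) (y := -y) (by simpa using hx)
  rw [valuation_neg] at h2
  omega

lemma valuation_add_eq_min {x y : ℚ_[p]} (hx : x ≠ 0) (hy : y ≠ 0)
    (hne : x.valuation ≠ y.valuation) : (x + y).valuation = min x.valuation y.valuation := by
  rcases hne.lt_or_gt with hlt | hlt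
  · rw [valuation_add_of_lt hx hlt, min_eq_left hlt.le]
  · rw [add_comm, valuation_add_of_lt hy hlt, min_eq_right hlt.le]

lemma norm_eq_one_iff_valuation_eq_zero {x : ℚ_[p]} (hx : x ≠ 0) :
    ‖x‖ = 1 ↔ x.valuation = 0 := by
  rw [norm_eq_zpow_neg_valuation hx, zpow_eq_one_iff_right₀ (by positivity)
    (by exact_mod_cast (Fact.out : p.Prime).ne_one), neg_eq_zero]

lemma norm_le_zpow_of_neg_le_valuation {x : ℚ_[p]} (hx : x ≠ 0) {m : ℤ}
    (h : -m ≤ x.valuation) : ‖x‖ ≤ (p : ℝ) ^ m := by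
  rw [norm_eq_zpow_neg_valuation hx]
  exact zpow_le_zpow_right₀ (by exact_mod_cast (Fact.out : p.Prime).one_lt.le) (by omega)

theorem valuation_of_isingPottsMap_eq_self {k : ℕ} {θ h : ℚ_[p]} (hk : 2 ≤ k) (hθ : θ ≠ 0)
    (hhθ : h + θ ≠ 0) (hfix : isingPottsMap k θ h = h) :
    h.valuation = 0 ∨
      (θ.valuation < 0 ∧ (h.valuation = k * θ.valuation ∨ h.valuation = -(k * θ.valuation))) := by
  have hh : h ≠ 0 := ne_zero_of_isingPottsMap_eq_self (by omega) hhθ hfix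
  rw [isingPottsMap_eq_self_iff hhθ] at hfix
  have hnum : θ * h + 1 ≠ 0 := by
    intro h0
    rw [h0, zero_pow (by omega)] at hfix
    exact mul_ne_zero hh (pow_ne_zero _ hhθ) hfix.symm
  have hθh : (θ * h).valuation = θ.valuation + h.valuation := valuation_mul hθ hh
  apply isingPotts_valuation_cases (K := k) (by exact_mod_cast hk)
    (A := (θ * h + 1).valuation) (B := (h + θ).valuation)
  · intro hne
    rw [valuation_add_eq_min (mul_ne_zero hθ hh) one_ne_zero (by rwa [hθh, valuation_one]), hθh,
      valuation_one]
  · simpa only [hθh, valuation_one] using le_valuation_add hnum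
  · exact valuation_add_eq_min hh hθ
  · exact le_valuation_add hhθ
  · simpa [valuation_mul hh (pow_ne_zero _ hhθ)] using congrArg valuation hfix

theorem norm_zpow_mul_pow_div_pow_le {k : ℕ} {g h : ℚ_[p]} (hk : 2 ≤ k) (hg : g ≠ 0) (hg1 : ‖g‖ ≠ 1)
    (hgh : h + g ^ 2 ≠ 0) (hfix : isingPottsMap k (g ^ 2) h = h) {S : ℤ} {c E n : ℕ}
    (hS : |S| ≤ E) (hc : c ≤ k ^ n) (hE : ((k : ℤ) - 1) * E + k = (k : ℤ) ^ (n + 1)) :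
    ‖g ^ S * h ^ c / (g⁻¹ * h + g) ^ E‖ ≤ (p : ℝ) ^ (2 * k * |g.valuation|) := by
  have hh : h ≠ 0 := ne_zero_of_isingPottsMap_eq_self (by omega) hgh hfix
  have hg'h : g⁻¹ * h ≠ 0 := mul_ne_zero (inv_ne_zero hg) hh
  have ht : g⁻¹ * h + g ≠ 0 := by
    rw [inv_mul_add_eq_inv_mul_add_sq hg]
    exact mul_ne_zero (inv_ne_zero hg) hgh
  have hq : g.valuation ≠ 0 := fun h0 => hg1 ((norm_eq_one_iff_valuation_eq_zero hg).2 h0)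
  have hcls := valuation_of_isingPottsMap_eq_self hk (pow_ne_zero 2 hg) hgh hfix
  have hu (hne : h.valuation - g.valuation ≠ g.valuation) :
      (g⁻¹ * h + g).valuation = min (h.valuation - g.valuation) g.valuation := by
    rw [valuation_add_eq_min hg'h hg (by rwa [valuation_mul (inv_ne_zero hg) hh, valuation_inv,
      neg_add_eq_sub]), valuation_mul (inv_ne_zero hg) hh, valuation_inv, neg_add_eq_sub]
  refine norm_le_zpow_of_neg_le_valuation (div_ne_zero (mul_ne_zero (zpow_ne_zero _ hg)
    (pow_ne_zero _ hh)) (pow_ne_zero _ ht)) ?_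
  rw [div_eq_mul_inv, valuation_mul (mul_ne_zero (zpow_ne_zero _ hg) (pow_ne_zero _ hh))
    (inv_ne_zero (pow_ne_zero _ ht)), valuation_mul (zpow_ne_zero _ hg) (pow_ne_zero _ hh),
    valuation_inv, valuation_zpow, valuation_pow, valuation_pow]
  rw [valuation_pow, Nat.cast_ofNat] at hcls
  generalize (g⁻¹ * h + g).valuation = u at hu ⊢
  generalize g.valuation = q at *
  generalize h.valuation = s at *
  have hSq : -(|q| * E) ≤ S * q := by
    have : |S * q| ≤ E * |q| := by rw [abs_mul]; gcongr
    linarith [neg_abs_le (S * q)]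
  have hck : (c : ℤ) ≤ (k : ℤ) ^ n := by exact_mod_cast hc
  rcases hcls with rfl | ⟨hT, rfl | rfl⟩
  · have hmin : min (0 - q) q = -|q| := by
      rcases hq.lt_or_gt with hq | hq
      · rw [min_eq_right (by omega), abs_of_neg hq, neg_neg]
      · rw [min_eq_left (by omega), abs_of_pos hq, zero_sub]
    rw [hu (by omega), hmin]
    nlinarith [abs_nonneg q]
  · have hq : q < 0 := by omega
    rw [hu (by nlinarith), min_eq_left (by nlinarith), abs_of_neg hq]
    have hcs : (k : ℤ) ^ n * (k * (2 * q)) ≤ c * (k * (2 * q)) :=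
      mul_le_mul_of_nonpos_right hck (by nlinarith)
    rw [abs_of_neg hq] at hSq
    linear_combination (2 * q) * hE + hSq + hcs
  · have hq : q < 0 := by omega
    rw [hu (by nlinarith), min_eq_right (by nlinarith), abs_of_neg hq]
    rw [abs_of_neg hq] at hSq
    nlinarith [mul_nonneg (Nat.cast_nonneg c : (0 : ℤ) ≤ c) (show 0 ≤ -q by omega)]

end Padic

lemma PadicInt.norm_add_lt_one_of_norm_eq_one {x y : ℤ_[2]} (hx : ‖x‖ = 1) (hy : ‖y‖ = 1) :
    ‖x + y‖ < 1 := by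
  have toZMod_eq_one (z : ℤ_[2]) (hz : ‖z‖ = 1) : toZMod z = 1 := by
    have : toZMod z ≠ 0 := ((isUnit_iff.2 hz).map toZMod).ne_zero
    revert this
    generalize toZMod z = a
    revert a
    decide
  rw [← mem_nonunits, ← IsLocalRing.mem_maximalIdeal, ← ker_toZMod, RingHom.mem_ker, map_add,
    toZMod_eq_one x hx, toZMod_eq_one y hy]
  decide

lemma Padic.norm_add_lt_one_of_norm_eq_one {x y : ℚ_[2]} (hx : ‖x‖ = 1) (hy : ‖y‖ = 1) :
    ‖x + y‖ < 1 :=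
  PadicInt.norm_add_lt_one_of_norm_eq_one (x := ⟨x, hx.le⟩) (y := ⟨y, hy.le⟩) hx hy

theorem Padic.norm_inv_mul_add_mem_Ioo {k : ℕ} {g h : ℚ_[2]} (hk : 2 ≤ k) (hg : ‖g‖ = 1)
    (hgh : h + g ^ 2 ≠ 0) (hfix : isingPottsMap k (g ^ 2) h = h) :
    ‖g⁻¹ * h + g‖ ∈ Set.Ioo 0 1 := by
  have hg0 : g ≠ 0 := norm_ne_zero_iff.1 (by rw [hg]; exact one_ne_zero)
  have hg2 : ‖g ^ 2‖ = 1 := by rw [norm_pow, hg, one_pow]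
  have hh : ‖h‖ = 1 := by
    have hv : (g ^ 2).valuation = 0 :=
      (norm_eq_one_iff_valuation_eq_zero (pow_ne_zero 2 hg0)).1 hg2
    rcases valuation_of_isingPottsMap_eq_self hk (pow_ne_zero 2 hg0) hgh hfix with hs | ⟨hT, -⟩
    · exact (norm_eq_one_iff_valuation_eq_zero
        (ne_zero_of_isingPottsMap_eq_self (by omega) hgh hfix)).2 hs
    · omega
  rw [inv_mul_add_eq_inv_mul_add_sq hg0, norm_mul, norm_inv, hg, inv_one, one_mul]
  exact ⟨norm_pos_iff.2 hgh, norm_add_lt_one_of_norm_eq_one hh hg2⟩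

def edgeCount (k n : ℕ) : ℕ := ∑ m : Fin n, k ^ ((m : ℕ) + 1)

section CayleyTree
variable {k n : ℕ}

lemma edgeCount_eq_div (hk : 2 ≤ k) : edgeCount k n = k * (k ^ n - 1) / (k - 1) := by
  have hdvd : k - 1 ∣ k ^ n - 1 := by simpa only [one_pow] using Nat.sub_dvd_pow_sub_pow k 1 n
  rw [Nat.mul_div_assoc _ hdvd, ← Nat.geomSum_eq hk, Finset.mul_sum, edgeCount,
    Fin.sum_univ_eq_sum_range (fun m => k ^ (m + 1))]
  simp [pow_succ, mul_comm]

lemma sub_one_mul_edgeCount_add (k n : ℕ) :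
    ((k : ℤ) - 1) * edgeCount k n + k = (k : ℤ) ^ (n + 1) := by
  have := geom_sum_mul (k : ℤ) n
  rw [edgeCount, Fin.sum_univ_eq_sum_range (fun m => k ^ (m + 1))]
  push_cast
  simp only [pow_succ, ← Finset.sum_mul]
  linear_combination (k : ℤ) * this

lemma le_edgeCount (hk : 1 ≤ k) (n : ℕ) : n ≤ edgeCount k n := by
  calc n = ∑ _m : Fin n, 1 := by simp
    _ ≤ edgeCount k n := Finset.sum_le_sum fun m _ => Nat.one_le_pow _ _ hk

lemma isingHam_eq_mul (N : ℤ) (σ : CayleyVertexLE k n → Bool) :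
    isingHam k N n σ = N * isingHam k 1 n σ := by
  simp only [isingHam, Finset.mul_sum, one_mul, mul_assoc]

lemma abs_isingHam_one_le (σ : CayleyVertexLE k n → Bool) :
    |isingHam k 1 n σ| ≤ edgeCount k n := by
  have abs_spinValue (b : Bool) : |spinValue b| = 1 := by cases b <;> simp [spinValue]
  calc |isingHam k 1 n σ| ≤ ∑ m : Fin n, ∑ _f : Fin ((m : ℕ) + 1) → Fin k, (1 : ℤ) := by
        refine (Finset.abs_sum_le_sum_abs _ _).trans (Finset.sum_le_sum fun m _ => ?_)
        refine (Finset.abs_sum_le_sum_abs _ _).trans (Finset.sum_le_sum fun f _ => ?_)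
        rw [abs_mul, abs_mul, abs_spinValue, abs_spinValue, abs_one, one_mul, one_mul]
    _ = edgeCount k n := by simp [edgeCount]

lemma isingHam_one_const_false :
    isingHam k 1 n (fun _ => false) = edgeCount k n := by
  simp [isingHam, edgeCount, spinValue]

lemma bdryPlusCount_le (σ : CayleyVertexLE k n → Bool) : bdryPlusCount k n σ ≤ k ^ n :=
  (Finset.card_filter_le _ _).trans (by simp)

lemma bdryPlusCount_const_false : bdryPlusCount k n (fun _ => false) = 0 := by
  simp [bdryPlusCount]

lemma cylinderValue2_eq (hk : 2 ≤ k) (N : ℤ) (ρ h : ℚ_[2]) (σ : CayleyVertexLE k n → Bool) :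
    cylinderValue2 k N ρ h n σ = (ρ ^ N) ^ isingHam k 1 n σ * h ^ bdryPlusCount k n σ /
      ((ρ ^ N)⁻¹ * h + ρ ^ N) ^ edgeCount k n / (h + 1) := by
  rw [cylinderValue2, isingHam_eq_mul, zpow_mul, zpow_neg, edgeCount_eq_div hk, div_div]

end CayleyTree

lemma tendsto_norm_cylinderValue2_const_false {k : ℕ} (hk : 2 ≤ k) {N : ℤ} {ρ h : ℚ_[2]}
    (hg : ‖ρ ^ N‖ = 1) (ht : ‖(ρ ^ N)⁻¹ * h + ρ ^ N‖ ∈ Set.Ioo 0 1) (hh : h + 1 ≠ 0) :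
    Filter.Tendsto (fun n => ‖cylinderValue2 k N ρ h n (fun _ => false)‖)
      Filter.atTop Filter.atTop := by
  simp_rw [cylinderValue2_eq hk, isingHam_one_const_false, bdryPlusCount_const_false,
    zpow_natCast, pow_zero, mul_one, norm_div, norm_pow, hg, one_pow, one_div, ← inv_pow]
  refine Filter.Tendsto.atTop_div_const (norm_pos_iff.2 hh) ?_
  exact (tendsto_pow_atTop_atTop_of_one_lt ((one_lt_inv₀ ht.1).2 ht.2)).comp
    (Filter.tendsto_atTop_mono (le_edgeCount (by omega)) Filter.tendsto_id)

theorem ising_measure_unbounded_iff_two_adic_general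
    (k : ℕ) (hk : 2 ≤ k) (N : ℤ)
    (ρ : ℚ_[2]) (hρ : ρ ^ (2 * N) ≠ -1 ∧ ρ ^ (2 * N) ≠ 0 ∧ ρ ^ (2 * N) ≠ 1)
    (h : ℚ_[2]) (hfix : h ≠ -(ρ ^ (2 * N)) ∧
      ((ρ ^ (2 * N) * h + 1) / (h + ρ ^ (2 * N))) ^ k = h)
    (hne : h ≠ -1) :
    (∀ M : ℝ, ∃ n : ℕ, 1 ≤ n ∧ ∃ σ : CayleyVertexLE k n → Bool,
        M < ‖cylinderValue2 k N ρ h n σ‖) ↔ ‖ρ‖ = 1 := by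
  obtain ⟨-, hθ0, hθ1⟩ := hρ
  have hN : N ≠ 0 := by rintro rfl; simp at hθ1
  have hρ0 : ρ ≠ 0 := by rintro rfl; exact hθ0 (zero_zpow _ (by omega))
  have hθ : ρ ^ (2 * N) = (ρ ^ N) ^ 2 := by rw [mul_comm, zpow_mul, zpow_two, sq]
  rw [hθ] at hfix
  have hgh : h + (ρ ^ N) ^ 2 ≠ 0 := fun h0 => hfix.1 (eq_neg_of_add_eq_zero_left h0)
  have hh1 : h + 1 ≠ 0 := fun h0 => hne (eq_neg_of_add_eq_zero_left h0)
  have hg : ‖ρ ^ N‖ = 1 ↔ ‖ρ‖ = 1 := by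
    rw [norm_zpow, ← zpow_left_inj₀ (norm_nonneg ρ) zero_le_one hN, one_zpow]
  rw [← hg]
  constructor
  · intro hunbdd
    by_contra hg1
    obtain ⟨n, -, σ, hlt⟩ := hunbdd ((2 : ℝ) ^ (2 * k * |(ρ ^ N).valuation|) / ‖h + 1‖)
    rw [cylinderValue2_eq hk, norm_div, div_lt_div_iff_of_pos_right (norm_pos_iff.2 hh1)] at hlt
    exact hlt.not_ge (Padic.norm_zpow_mul_pow_div_pow_le hk (zpow_ne_zero N hρ0) hg1 hgh hfix.2
      (abs_isingHam_one_le σ) (bdryPlusCount_le σ) (sub_one_mul_edgeCount_add k n))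
  · intro hg1 M
    have hlim := tendsto_norm_cylinderValue2_const_false hk hg1
      (Padic.norm_inv_mul_add_mem_Ioo hk hg1 hgh hfix.2) hh1
    obtain ⟨n, hM, hn⟩ := ((hlim.eventually_gt_atTop M).and (Filter.eventually_ge_atTop 1)).exists
    exact ⟨n, hn, _, hM⟩

/-- for `p = 2`, the translation-invariant generalized `2`-adic Gibbs measure
`μ_h` of the Ising model associated to a fixed point `h ≠ -1` of `f_θ`, `θ = ρ^{2N}`, is
unbounded if and only if `|ρ|_2 = 1`. -/
theorem ising_measure_unbounded_iff_two_adic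
    (k : ℕ) (hk : 2 ≤ k) (N : ℤ) (hN : N ≠ 0)
    (ρ : ℚ_[2]) (hρ : ρ ^ (2 * N) ≠ -1 ∧ ρ ^ (2 * N) ≠ 0 ∧ ρ ^ (2 * N) ≠ 1)
    (h : ℚ_[2]) (hfix : h ≠ -(ρ ^ (2 * N)) ∧
      ((ρ ^ (2 * N) * h + 1) / (h + ρ ^ (2 * N))) ^ k = h)
    (hne : h ≠ -1) (hdenom : ρ ^ (-N) * h + ρ ^ N ≠ 0) :
    (∀ M : ℝ, ∃ n : ℕ, 1 ≤ n ∧ ∃ σ : CayleyVertexLE k n → Bool,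
        M < ‖cylinderValue2 k N ρ h n σ‖) ↔ ‖ρ‖ = 1 :=
  ising_measure_unbounded_iff_two_adic_general k hk N ρ hρ h hfix hne
end
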